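/- Let $\eta, k, r, \lambda$ be integers with $k > r \geq \lambda \geq 0$ and $k-1 > \lambda$, and let $0 < \alpha_1 < \cdots < \alpha_\lambda < \eta$ with $\alpha_i = \eta - \alpha_{\lambda+1-i}$. Let $\pi$ be an overpartition satisfying conditions (1)-(4) of the class $\overline{B}_0$ (parts congruent to $0, \alpha_1, \ldots, \alpha_\lambda \pmod{\eta}$; only multiples of $\eta$ may be non-overlined; difference-at-distance-$k-1$ condition; at most $r$ parts not exceeding $\eta$). If there exists an index $i$ with $1 \leq i \leq \ell - k + 2$ such that $\pi_i < \overline{2\eta}$ and $\pi_i \leq \pi_{i+k-2} + \eta$ (strict if $\pi_i$ is overlined), then $[|\pi_i|/\eta] + \cdots + [|\pi_{i+k-2}|/\eta] \equiv f_{\leq \eta}(\pi) + \overline{V}_\pi(\pi_i) \pmod{2}$, where $f_{\leq \eta}(\pi)$ counts parts of $\pi$ not exceeding $\eta$, and $\overline{V}_\pi(\pi_i)$ counts overlined parts not exceeding $\pi_i$ that are not divisible by $\eta$. -/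

import Mathlib

/-- A part of an overpartition: a size together with a flag telling
whether the part is overlined. -/
structure OPart where
  size : ℕ
  overlined : Bool
deriving DecidableEq

/-- The value of a part in the ordering `1̄ < 1 < 2̄ < 2 < ⋯`:
an overlined part of size `t` has value `2t - 1`, a non-overlined one `2t`. -/
def OPart.val (p : OPart) : ℕ := 2 * p.size - (if p.overlined then 1 else 0)

def dpart : OPart := ⟨0, false⟩

/-- value of the `i`-th part (0-based). -/
def pval (π : List OPart) (i : ℕ) : ℕ := (π.getD i dpart).val

def pover (π : List OPart) (i : ℕ) : Bool := (π.getD i dpart).overlined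

def psize (π : List OPart) (i : ℕ) : ℕ := (π.getD i dpart).size

/-- the weight `|π|`: the sum of the sizes of the parts. -/
def wt (π : List OPart) : ℕ := (π.map OPart.size).sum

/-- An overpartition: a sequence of positive parts, non-increasing in the
ordering `1̄ < 1 < 2̄ < 2 < ⋯`, in which each size is overlined at most once
(the overlined copy, being smallest among equal sizes, is the last occurrence). -/
def IsOverPartition (π : List OPart) : Prop :=
  List.Pairwise (fun p q : OPart => q.val ≤ p.val) π ∧
  (∀ p ∈ π, 0 < p.size) ∧
  (∀ t : ℕ, π.count (⟨t, true⟩ : OPart) ≤ 1)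

/-- `{π_{i+l}}_{0 ≤ l ≤ m-1}` is an `m`-band of `π`:
`π_i ≤ π_{i+m-1} + η`, with strict inequality if `π_i` is overlined. -/
def IsBand (η : ℕ) (π : List OPart) (m i : ℕ) : Prop :=
  i + m ≤ π.length ∧
  pval π i ≤ pval π (i + m - 1) + 2 * η ∧
  (pover π i = true → pval π i < pval π (i + m - 1) + 2 * η)

/-- `V̄_π(N)`: the number of overlined parts of value at most `N`
whose size is not divisible by `η`. -/
def Vbar (η : ℕ) (π : List OPart) (N : ℕ) : ℕ :=
  π.countP (fun p => p.overlined && decide (p.val ≤ N) && !(decide (p.size % η = 0)))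

/-- `Ō_π(N)`: the number of overlined parts of value at least `N`
whose size is divisible by `η`. -/
def Obar (η : ℕ) (π : List OPart) (N : ℕ) : ℕ :=
  π.countP (fun p => p.overlined && decide (N ≤ p.val) && decide (p.size % η = 0))

/-- `f_{≤η}(π)`: the number of parts not exceeding `η`. -/
def fLe (η : ℕ) (π : List OPart) : ℕ :=
  π.countP (fun p => decide (p.val ≤ 2 * η))

/-- `[|π_i|/η] + ⋯ + [|π_{i+m-1}|/η]`. -/
def bandSum (η : ℕ) (π : List OPart) (i m : ℕ) : ℕ :=
  ∑ l ∈ Finset.range m, psize π (i + l) / η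

/-- Every part is congruent to `0, α_1, …, α_λ` modulo `η`. -/
def CongParts (α : ℕ → ℕ) (lam η : ℕ) (π : List OPart) : Prop :=
  ∀ p ∈ π, p.size % η = 0 ∨ ∃ s, 1 ≤ s ∧ s ≤ lam ∧ p.size % η = α s

/-- The class `B̄(α_1,…,α_λ; η, k, r)`: conditions (1)–(4) of the definition
of `B̄₀`. -/
def InBbar (α : ℕ → ℕ) (lam η k r : ℕ) (π : List OPart) : Prop :=
  IsOverPartition π ∧
  CongParts α lam η π ∧
  (∀ p ∈ π, p.overlined = false → η ∣ p.size) ∧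
  (∀ i, i + k ≤ π.length →
    pval π (i + k - 1) + 2 * η ≤ pval π i ∧
    (pover π i = false → pval π (i + k - 1) + 2 * η < pval π i)) ∧
  fLe η π ≤ r

/-- An `m`-band at `i` is even:
`[|π_i|/η]+⋯+[|π_{i+m-1}|/η] ≡ r - 1 + V̄_π(π_i) + Ō_π(π_{i+m-1}) (mod 2)`. -/
def EvenBand (η r : ℕ) (π : List OPart) (m i : ℕ) : Prop :=
  Int.ModEq 2 (bandSum η π i m)
    ((r : ℤ) - 1 + (Vbar η π (pval π i) : ℤ) + (Obar η π (pval π (i + m - 1)) : ℤ))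

/-- Condition (5) of the definition of `B̄₀`. -/
def Cond5 (η k r : ℕ) (π : List OPart) : Prop :=
  fLe η π = r → (⟨η, true⟩ : OPart) ∉ π →
    ∃ i, IsBand η π (k - 1) i ∧ pval π i < 2 * (2 * η) - 1

/-- The class `B̄₀(α_1,…,α_λ; η, k, r)`: conditions (1)–(6). -/
def InB0 (α : ℕ → ℕ) (lam η k r : ℕ) (π : List OPart) : Prop :=
  InBbar α lam η k r π ∧ Cond5 η k r π ∧
  ∀ i, IsBand η π (k - 1) i → EvenBand η r π (k - 1) i

/-- `s(π) > t̄η`: every overlined part divisible by `η` has size `> tη`. -/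
def SGt (η t : ℕ) (π : List OPart) : Prop :=
  ∀ p ∈ π, p.overlined = true → η ∣ p.size → t * η < p.size

/-- `s(π) = t̄η`. -/
def SEq (η t : ℕ) (π : List OPart) : Prop :=
  (⟨t * η, true⟩ : OPart) ∈ π ∧
  ∀ p ∈ π, p.overlined = true → η ∣ p.size → t * η ≤ p.size

/-- `g(π) ≥ x` (value `x`): every part starting a `(k-1)`-band has value `≥ x`. -/
def GGe (η k : ℕ) (π : List OPart) (x : ℕ) : Prop :=
  ∀ i, IsBand η π (k - 1) i → x ≤ pval π i

/-- `g(π) < x`: some part starting a `(k-1)`-band has value `< x`. -/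
def GLt (η k : ℕ) (π : List OPart) (x : ℕ) : Prop :=
  ∃ i, IsBand η π (k - 1) i ∧ pval π i < x

/-- `π ∈ B̄₀^=(α_1,…,α_λ; η,k,r | t)`. -/
def InBeq (α : ℕ → ℕ) (lam η k r t : ℕ) (π : List OPart) : Prop :=
  InB0 α lam η k r π ∧
  ((SEq η t π ∧ GGe η k π (2 * (t * η) - 1)) ∨
   (SGt η t π ∧ GGe η k π (2 * (t * η)) ∧ GLt η k π (2 * ((t + 1) * η) - 1)))

/-- `π ∈ B̄₀^>(α_1,…,α_λ; η,k,r | t)`. -/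
def InBgt (α : ℕ → ℕ) (lam η k r t : ℕ) (π : List OPart) : Prop :=
  InB0 α lam η k r π ∧ SGt η t π ∧ GGe η k π (2 * ((t + 1) * η) - 1)

/-- An `m`-band belonging to the closed interval `[(t-1)η, (t+1)η]`. -/
def BandInC (η t : ℕ) (π : List OPart) (m i : ℕ) : Prop :=
  IsBand η π m i ∧ 2 * ((t - 1) * η) ≤ pval π (i + m - 1) ∧
  pval π i ≤ 2 * ((t + 1) * η)

/-- An `m`-band belonging to `[(t-1)η, \overline{(t+1)η})`. -/
def BandInO (η t : ℕ) (π : List OPart) (m i : ℕ) : Prop :=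
  IsBand η π m i ∧ 2 * ((t - 1) * η) ≤ pval π (i + m - 1) ∧
  pval π i < 2 * ((t + 1) * η) - 1

/-- An `m`-band at `i` is of type N. -/
def TypeN (η r t : ℕ) (π : List OPart) (m i : ℕ) : Prop :=
  Int.ModEq 2 (bandSum η π i m)
    ((t : ℤ) + (r : ℤ) - 1 + (Vbar η π (pval π i) : ℤ) +
      (Obar η π (pval π (i + m - 1)) : ℤ))

/-- `π` is obtained from `μ` by inserting the part `p`. -/
def InsertPart (μ : List OPart) (p : OPart) (π : List OPart) : Prop :=
  ∃ l1 l2, μ = l1 ++ l2 ∧ π = l1 ++ p :: l2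

/-- The `(k-1)`-reduction `D_t` as a relation: `μ = D_t(π)`. -/
def DtRel (η t : ℕ) (π μ : List OPart) : Prop :=
  ((⟨t * η, true⟩ : OPart) ∈ π ∧ InsertPart μ ⟨t * η, true⟩ π) ∨
  ((⟨t * η, true⟩ : OPart) ∉ π ∧ InsertPart μ ⟨t * η, false⟩ π)

/-- `μ` has a `(k-2)`-band belonging to `[(t-1)η, \overline{(t+1)η})` of type N. -/
def HasTypeNBand (η r k t : ℕ) (μ : List OPart) : Prop :=
  ∃ i, BandInO η t μ (k - 2) i ∧ TypeN η r t μ (k - 2) i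

/-- The `(k-1)`-augmentation `C_t` as a relation: `π = C_t(μ)`. -/
def CtRel (η r k t : ℕ) (μ π : List OPart) : Prop :=
  (HasTypeNBand η r k t μ ∧ InsertPart μ ⟨t * η, false⟩ π) ∨
  (¬ HasTypeNBand η r k t μ ∧ InsertPart μ ⟨t * η, true⟩ π)

/-- `B₁`-type overpartitions: conditions (1)–(4), no overlined part divisible
by `η`, and at most `r - 1` parts not exceeding `η`. -/
def InB1over (α : ℕ → ℕ) (lam η k r : ℕ) (π : List OPart) : Prop :=
  InBbar α lam η k r π ∧ (∀ p ∈ π, p.overlined = true → ¬ η ∣ p.size) ∧ fLe η π < r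

/-- `D_η`: partitions into distinct parts divisible by `η`. -/
def InD (η : ℕ) (τ : List ℕ) : Prop :=
  List.Pairwise (· > ·) τ ∧ ∀ x ∈ τ, 0 < x ∧ η ∣ x

/-- Bressoud's class `B₁(α_1,…,α_λ; η,k,r)` of ordinary partitions. -/
def InB1nat (α : ℕ → ℕ) (lam η k r : ℕ) (σ : List ℕ) : Prop :=
  List.Pairwise (· ≥ ·) σ ∧ (∀ x ∈ σ, 0 < x) ∧
  (∀ x ∈ σ, x % η = 0 ∨ ∃ s, 1 ≤ s ∧ s ≤ lam ∧ x % η = α s) ∧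
  (∀ x : ℕ, ¬ η ∣ x → σ.count x ≤ 1) ∧
  (∀ i, i + k ≤ σ.length →
    σ.getD (i + k - 1) 0 + η ≤ σ.getD i 0 ∧
    (η ∣ σ.getD i 0 → σ.getD (i + k - 1) 0 + η < σ.getD i 0)) ∧
  σ.countP (fun x => decide (x ≤ η)) < r

/-- The class `Ā₀(α_1,…,α_λ; η,k,r)`. Congruence conditions involving `η/2`
are stated with sizes doubled. -/
def InA0 (α : ℕ → ℕ) (lam η k r : ℕ) (π : List OPart) : Prop :=
  IsOverPartition π ∧
  CongParts α lam η π ∧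
  (Even lam →
    ∀ p ∈ π, p.overlined = false →
      η ∣ p.size ∧
      ¬ (2 * η * (2 * k - lam - 1) ∣ 2 * p.size) ∧
      2 * p.size % (2 * η * (2 * k - lam - 1)) ≠ η * (2 * r - lam) ∧
      2 * p.size % (2 * η * (2 * k - lam - 1)) ≠
        2 * η * (2 * k - lam - 1) - η * (2 * r - lam)) ∧
  (¬ Even lam →
    (∀ p ∈ π, p.overlined = false →
      η ∣ 2 * p.size ∧
      p.size % (2 * η) ≠ η ∧
      ¬ (2 * η * (2 * k - lam - 1) ∣ 2 * p.size) ∧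
      2 * p.size % (2 * η * (2 * k - lam - 1)) ≠ η * (2 * r - lam) ∧
      2 * p.size % (2 * η * (2 * k - lam - 1)) ≠
        2 * η * (2 * k - lam - 1) - η * (2 * r - lam)) ∧
    (∀ p ∈ π, p.overlined = true → 2 * p.size % (2 * η) ≠ η))


/-!
Every part of `π` contributes an even amount to `bandSum + f_{≤η}(π) + V̄_π(π_i)`.
By the difference condition, parts before the band exceed `η`, and being `≥ π_i`
(strictly, if overlined, as an overlined size occurs only once) they contribute nothing.
Parts after the band lie at least `η` below `π_i < \overline{2η}`, so they are overlined parts of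
size `< η`, counted once by `f_{≤η}` and once by `V̄`. A part `p` of the band has
`|p| < 2η`, and `[|p|/η] + [p ≤ η] + [p counted by V̄] = 2` in each of the cases
`p ∈ {η, \overline{η}}`, `|p| < η` and `η < |p| < 2η`.
-/

open Finset

theorem List.countP_eq_sum_range_getD {α : Type*} (l : List α) (d : α) (p : α → Bool) :
    l.countP p = ∑ j ∈ Finset.range l.length, if p (l.getD j d) then 1 else 0 := by
  induction l with
  | nil => simp
  | cons a t ih =>
    rw [List.countP_cons, List.length_cons, Finset.sum_range_succ', ih]
    simp only [List.getD_cons_succ, List.getD_cons_zero]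

theorem List.getD_mem {α : Type*} {l : List α} {j : ℕ} (d : α) (h : j < l.length) :
    l.getD j d ∈ l := by
  rw [List.getD_eq_getElem _ _ h]
  exact List.getElem_mem h

namespace OPart

theorem eq_of_val_eq {p q : OPart} (hp : 0 < p.size) (hq : 0 < q.size) (h : p.val = q.val) :
    p = q := by
  obtain ⟨s, _ | _⟩ := p <;> obtain ⟨t, _ | _⟩ := q <;> simp [val] at hp hq h ⊢ <;> omega

def fLeVbarWeight (η N : ℕ) (q : OPart) : ℕ :=
  (if q.val ≤ 2 * η then 1 else 0) +
    if q.overlined && decide (q.val ≤ N) && !decide (q.size % η = 0) then 1 else 0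

variable {η N : ℕ} {q : OPart}

theorem val_pos (hq : 0 < q.size) : 0 < q.val := by
  unfold val
  split <;> omega

theorem fLeVbarWeight_eq_zero (hη : 2 * η < q.val) (hN : q.overlined = true → N < q.val) :
    fLeVbarWeight η N q = 0 := by
  obtain ⟨s, _ | _⟩ := q <;> simp_all [fLeVbarWeight]

theorem fLeVbarWeight_eq_two (hq : 0 < q.size) (hdvd : q.overlined = false → η ∣ q.size)
    (hN : q.val ≤ N) (hsmall : q.val + 2 ≤ 2 * η) :
    fLeVbarWeight η N q = 2 := by
  obtain ⟨s, o⟩ := q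
  have hs : s < η := by cases o <;> simp [val] at hsmall <;> omega
  cases o
  · have := Nat.le_of_dvd hq (hdvd rfl)
    dsimp only at this
    omega
  · simp_all [fLeVbarWeight, val, Nat.mod_eq_of_lt hs]
    split_ifs <;> omega

theorem size_div_add_fLeVbarWeight_eq_two (hη : 0 < η) (hq : 0 < q.size)
    (hdvd : q.overlined = false → η ∣ q.size) (hN : q.val ≤ N) (hN4 : N + 2 ≤ 4 * η) :
    q.size / η + fLeVbarWeight η N q = 2 := by
  obtain ⟨s, o⟩ := q
  have hdiv : s / η < 2 := (Nat.div_lt_iff_lt_mul hη).2 (by cases o <;> simp_all [val] <;> omega)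
  have hmod := Nat.mod_lt s hη
  have hs := Nat.div_add_mod s η
  rw [Nat.dvd_iff_mod_eq_zero] at hdvd
  interval_cases h : s / η <;> cases o <;> simp_all [fLeVbarWeight, val] <;> split_ifs <;> omega

end OPart

namespace IsOverPartition

variable {π : List OPart} {j₁ j₂ : ℕ}

theorem pval_pos (hπ : IsOverPartition π) (h : j₁ < π.length) : 0 < pval π j₁ :=
  OPart.val_pos (hπ.2.1 _ (List.getD_mem dpart h))

theorem pval_le (hπ : IsOverPartition π) (hj : j₁ ≤ j₂) (h₂ : j₂ < π.length) :
    pval π j₂ ≤ pval π j₁ := by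
  have h₁ : j₁ < π.length := hj.trans_lt h₂
  rcases hj.eq_or_lt with rfl | hj
  · rfl
  · simp only [pval, List.getD_eq_getElem _ _ h₁, List.getD_eq_getElem _ _ h₂]
    exact List.pairwise_iff_getElem.mp hπ.1 j₁ j₂ h₁ h₂ hj

theorem pval_lt_of_pover (hπ : IsOverPartition π) (hj : j₁ < j₂) (h₂ : j₂ < π.length)
    (ho : pover π j₁ = true) : pval π j₂ < pval π j₁ := by
  have h₁ : j₁ < π.length := hj.trans h₂
  refine (hπ.pval_le hj.le h₂).lt_of_ne fun heq => ?_
  simp only [pover, pval, List.getD_eq_getElem _ _ h₁, List.getD_eq_getElem _ _ h₂] at ho heq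
  have hsame : π[j₂] = π[j₁] :=
    OPart.eq_of_val_eq (hπ.2.1 _ (List.getElem_mem h₂)) (hπ.2.1 _ (List.getElem_mem h₁)) heq
  have hfirst : 0 < (π.take j₂).count π[j₁] :=
    List.count_pos_iff.2 (List.mem_take_iff_getElem.2 ⟨j₁, by omega, rfl⟩)
  have hsecond : 0 < (π.drop j₂).count π[j₁] := by
    rw [List.count_pos_iff, List.drop_eq_getElem_cons h₂, hsame]
    exact List.mem_cons_self
  have hx : π[j₁] = ⟨π[j₁].size, true⟩ := by rw [← ho]
  have hcount := hπ.2.2 π[j₁].size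
  have hsplit := congrArg (List.count π[j₁]) (List.take_append_drop j₂ π)
  rw [List.count_append] at hsplit
  rw [← hx] at hcount
  omega

end IsOverPartition

section

variable {η : ℕ} {π : List OPart}

theorem fLe_add_Vbar_eq_sum (N : ℕ) :
    fLe η π + Vbar η π N = ∑ j ∈ range π.length, (π.getD j dpart).fLeVbarWeight η N := by
  rw [fLe, Vbar, List.countP_eq_sum_range_getD _ dpart, List.countP_eq_sum_range_getD _ dpart,
    ← sum_add_distrib]
  exact sum_congr rfl fun j _ => by simp [OPart.fLeVbarWeight]

theorem bandSum_eq_sum_range_length {i m : ℕ} (h : i + m ≤ π.length) :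
    bandSum η π i m = ∑ j ∈ range π.length, if j ∈ Ico i (i + m) then psize π j / η else 0 := by
  have hsub : Ico i (i + m) ⊆ range π.length := fun j hj => by
    simp only [mem_Ico, mem_range] at hj ⊢
    omega
  rw [sum_ite_mem, inter_eq_right.2 hsub, sum_Ico_eq_sum_range, add_tsub_cancel_left, bandSum]

theorem even_bandSum_add_fLe_add_Vbar (hη : 0 < η) (hπ : IsOverPartition π)
    (hdvd : ∀ p ∈ π, p.overlined = false → η ∣ p.size) {i m : ℕ}
    (hdiff : ∀ j, j + m < π.length → pval π (j + m) + 2 * η ≤ pval π j)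
    (hm : 0 < m) (hlen : i + m ≤ π.length) (hi : pval π i + 2 ≤ 4 * η) :
    Even (bandSum η π i m + (fLe η π + Vbar η π (pval π i))) := by
  rw [bandSum_eq_sum_range_length hlen, fLe_add_Vbar_eq_sum, ← sum_add_distrib]
  refine even_sum _ fun j hj => ?_
  rw [mem_range] at hj
  have hmem := List.getD_mem dpart hj
  have hpos : 0 < psize π j := hπ.2.1 _ hmem
  rcases lt_or_ge j i with hji | hij
  · rw [if_neg (by simp only [mem_Ico]; omega), OPart.fLeVbarWeight_eq_zero]
    · exact Even.zero
    · have := hdiff j (by omega)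
      have := hπ.pval_pos (j₁ := j + m) (by omega)
      unfold pval at *
      omega
    · exact fun ho => hπ.pval_lt_of_pover hji (by omega) ho
  rcases lt_or_ge j (i + m) with hjm | hjm
  · rw [if_pos (mem_Ico.2 ⟨hij, hjm⟩), psize, OPart.size_div_add_fLeVbarWeight_eq_two hη hpos
      (hdvd _ hmem) (hπ.pval_le hij hj) hi]
    exact even_two
  · have hbelow := hdiff i (by omega)
    have := hπ.pval_le hjm hj
    rw [if_neg (by simp only [mem_Ico]; omega), zero_add,
      OPart.fLeVbarWeight_eq_two hpos (hdvd _ hmem) (hπ.pval_le hij hj) (by unfold pval at *; omega)]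
    exact even_two

end

theorem stmt_0_general (α : ℕ → ℕ) (lam η k r : ℕ)
    (hη : 0 < η)
    (hlk : lam + 1 < k)
    (π : List OPart) (hπ : InBbar α lam η k r π)
    (i : ℕ) (hband : IsBand η π (k - 1) i)
    (hlt : pval π i < 2 * (2 * η) - 1) :
    Int.ModEq 2 (bandSum η π i (k - 1))
      ((fLe η π : ℤ) + (Vbar η π (pval π i) : ℤ)) := by
  obtain ⟨hop, -, hdvd, hdiff, -⟩ := hπ
  have hdiff' : ∀ j, j + (k - 1) < π.length → pval π (j + (k - 1)) + 2 * η ≤ pval π j :=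
    fun j hj => by simpa [show j + k - 1 = j + (k - 1) by omega] using (hdiff j (by omega)).1
  obtain ⟨c, hc⟩ :=
    even_bandSum_add_fLe_add_Vbar hη hop hdvd hdiff' (by omega) hband.1 (by omega)
  unfold Int.ModEq
  omega

theorem stmt_0 (α : ℕ → ℕ) (lam η k r : ℕ)
    (hη : 0 < η)
    (hαpos : ∀ i, 1 ≤ i → i ≤ lam → 0 < α i ∧ α i < η)
    (hαmono : ∀ i j, 1 ≤ i → i < j → j ≤ lam → α i < α j)
    (hαsym : ∀ i, 1 ≤ i → i ≤ lam → α i = η - α (lam + 1 - i))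
    (hrk : r < k) (hlr : lam ≤ r) (hlk : lam + 1 < k)
    (π : List OPart) (hπ : InBbar α lam η k r π)
    (i : ℕ) (hband : IsBand η π (k - 1) i)
    (hlt : pval π i < 2 * (2 * η) - 1) :
    Int.ModEq 2 (bandSum η π i (k - 1))
      ((fLe η π : ℤ) + (Vbar η π (pval π i) : ℤ)) :=
  stmt_0_general α lam η k r hη hlk π hπ i hband hlt
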